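/- arXiv:2510.06583 — 4 statements merged into one kernel-verified Lean document; each statement's English description precedes it below -/
import Mathlib

section
/- Let A_1, A_2, ..., A_N ∈ ℂ^{n×n}. For each i let 𝒜_i ⊂ ℂ^{n×n} be a set of matrices with A_i ∈ 𝒜_i, and suppose there exists an index k ∈ {1,...,N} such that for every i ≠ k the set 𝒜_i satisfies the arc property. If −1 ∉ SRG(𝒜_1) · SRG(𝒜_2) ⋯ SRG(𝒜_N) (the elementwise product of sets of complex numbers), then the matrix I + A_1 A_2 ⋯ A_N is nonsingular. -/
open scoped Pointwise Classical
open Complex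

noncomputable section SRGDefs

/-- Apply a matrix to a vector in Euclidean space. -/
def mapply {n : ℕ} (C : Matrix (Fin n) (Fin n) ℂ) (x : EuclideanSpace ℂ (Fin n)) :
    EuclideanSpace ℂ (Fin n) :=
  Matrix.toEuclideanLin C x

/-- The θ-angle `∠_θ(x,y) = arccos (Re ⟨x, e^{-iθ} y⟩ / (‖x‖‖y‖))` between complex vectors,
with value `0` if `x = 0` or `y = 0`. -/
def angleTheta {n : ℕ} (θ : ℝ) (x y : EuclideanSpace ℂ (Fin n)) : ℝ :=
  if x = 0 ∨ y = 0 then 0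
  else Real.arccos ((inner ℂ x ((Complex.exp (-(θ : ℂ) * Complex.I)) • y) : ℂ).re / (‖x‖ * ‖y‖))

/-- The classical angle `∠(x,y) = arccos (Re ⟨x, y⟩ / (‖x‖‖y‖))` between complex vectors,
with value `0` if `x = 0` or `y = 0`. -/
def angleStd {n : ℕ} (x y : EuclideanSpace ℂ (Fin n)) : ℝ :=
  if x = 0 ∨ y = 0 then 0
  else Real.arccos ((inner ℂ x y : ℂ).re / (‖x‖ * ‖y‖))

/-- The θ-symmetric scaled relative graph
`SRG_θ(C) = { (‖Cx‖/‖x‖)·e^{i(θ ± ∠_θ(x,Cx))} : 0 ≠ x ∈ ℂ^n }`. -/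
def SRGt {n : ℕ} (θ : ℝ) (C : Matrix (Fin n) (Fin n) ℂ) : Set ℂ :=
  { w | ∃ x : EuclideanSpace ℂ (Fin n), x ≠ 0 ∧
      (w = (↑(‖mapply C x‖ / ‖x‖) : ℂ) *
          Complex.exp ((↑(θ + angleTheta θ x (mapply C x)) : ℂ) * Complex.I) ∨
       w = (↑(‖mapply C x‖ / ‖x‖) : ℂ) *
          Complex.exp ((↑(θ - angleTheta θ x (mapply C x)) : ℂ) * Complex.I)) }

/-- The standard scaled relative graph
`SRG(C) = { (‖Cx‖/‖x‖)·e^{±i∠(x,Cx)} : 0 ≠ x ∈ ℂ^n }`. -/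
def SRGstd {n : ℕ} (C : Matrix (Fin n) (Fin n) ℂ) : Set ℂ :=
  { w | ∃ x : EuclideanSpace ℂ (Fin n), x ≠ 0 ∧
      (w = (↑(‖mapply C x‖ / ‖x‖) : ℂ) *
          Complex.exp ((↑(angleStd x (mapply C x)) : ℂ) * Complex.I) ∨
       w = (↑(‖mapply C x‖ / ‖x‖) : ℂ) *
          Complex.exp (-((↑(angleStd x (mapply C x)) : ℂ) * Complex.I))) }

/-- θ-symmetric SRG of a set of matrices. -/
def SRGtSet {n : ℕ} (θ : ℝ) (𝒞 : Set (Matrix (Fin n) (Fin n) ℂ)) : Set ℂ :=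
  ⋃ C ∈ 𝒞, SRGt θ C

/-- Standard SRG of a set of matrices. -/
def SRGstdSet {n : ℕ} (𝒞 : Set (Matrix (Fin n) (Fin n) ℂ)) : Set ℂ :=
  ⋃ C ∈ 𝒞, SRGstd C

/-- `Arc_θ^+(z, z̄e^{2iθ}) = { |z|·e^{i(μ·arg z + θ(1−μ))} : μ ∈ [−1,1] }`. -/
def arcPlus (θ : ℝ) (z : ℂ) : Set ℂ :=
  { w | ∃ μ : ℝ, μ ∈ Set.Icc (-1 : ℝ) 1 ∧
      w = (↑(‖z‖) : ℂ) *
        Complex.exp ((↑(μ * Complex.arg z + θ * (1 - μ)) : ℂ) * Complex.I) }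

/-- `Arc_θ^−(z, z̄e^{2iθ}) = −Arc_θ^+(−z, −z̄e^{2iθ})`. -/
def arcMinus (θ : ℝ) (z : ℂ) : Set ℂ := -(arcPlus θ (-z))

/-- `Arc^+(z, z̄) = { |z|·e^{iμ·arg z} : μ ∈ [−1,1] }`. -/
def arcPlus0 (z : ℂ) : Set ℂ :=
  { w | ∃ μ : ℝ, μ ∈ Set.Icc (-1 : ℝ) 1 ∧
      w = (↑(‖z‖) : ℂ) * Complex.exp ((↑(μ * Complex.arg z) : ℂ) * Complex.I) }

/-- `Arc^−(z, z̄) = −Arc^+(−z, −z̄)`. -/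
def arcMinus0 (z : ℂ) : Set ℂ := -(arcPlus0 (-z))

/-- A matrix set satisfies the θ-arc property. -/
def arcProp {n : ℕ} (θ : ℝ) (𝒞 : Set (Matrix (Fin n) (Fin n) ℂ)) : Prop :=
  (∀ z ∈ SRGtSet θ 𝒞, arcPlus θ z ⊆ SRGtSet θ 𝒞) ∨
  (∀ z ∈ SRGtSet θ 𝒞, arcMinus θ z ⊆ SRGtSet θ 𝒞)

/-- A matrix set satisfies the (standard) arc property. -/
def arcPropStd {n : ℕ} (𝒞 : Set (Matrix (Fin n) (Fin n) ℂ)) : Prop :=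
  (∀ z ∈ SRGstdSet 𝒞, arcPlus0 z ⊆ SRGstdSet 𝒞) ∨
  (∀ z ∈ SRGstdSet 𝒞, arcMinus0 z ⊆ SRGstdSet 𝒞)

/-- The line segment `[z₁, z₂] = { μz₁ + (1−μ)z₂ : μ ∈ [0,1] }`. -/
def segmentC (z₁ z₂ : ℂ) : Set ℂ :=
  { w | ∃ μ : ℝ, μ ∈ Set.Icc (0 : ℝ) 1 ∧ w = (↑μ : ℂ) * z₁ + (↑(1 - μ) : ℂ) * z₂ }

/-- A matrix set satisfies the θ-chord property. -/
def chordProp {n : ℕ} (θ : ℝ) (𝒞 : Set (Matrix (Fin n) (Fin n) ℂ)) : Prop :=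
  ∀ z ∈ SRGtSet θ 𝒞,
    segmentC z ((starRingEnd ℂ) z * Complex.exp ((↑(2 * θ) : ℂ) * Complex.I)) ⊆ SRGtSet θ 𝒞

/-- The arc hull `Hull_arc(SRG_θ(C)) = ⋃_{z ∈ SRG_θ(C)} Arc_θ^+(z, z̄e^{2iθ})`. -/
def hullArc {n : ℕ} (θ : ℝ) (C : Matrix (Fin n) (Fin n) ℂ) : Set ℂ :=
  ⋃ z ∈ SRGt θ C, arcPlus θ z

/-- The phase spread `Γ_θ(C) = sup_{0 ≠ x} ∠_θ(x, Cx)`. -/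
def phaseSpread {n : ℕ} (θ : ℝ) (C : Matrix (Fin n) (Fin n) ℂ) : ℝ :=
  sSup { a : ℝ | ∃ x : EuclideanSpace ℂ (Fin n), x ≠ 0 ∧ a = angleTheta θ x (mapply C x) }

/-- The largest singular value `σ_max(C) = max_{‖x‖=1} ‖Cx‖`. -/
def sigmaMax {n : ℕ} (C : Matrix (Fin n) (Fin n) ℂ) : ℝ :=
  sSup { a : ℝ | ∃ x : EuclideanSpace ℂ (Fin n), ‖x‖ = 1 ∧ a = ‖mapply C x‖ }

/-- The smallest singular value `σ_min(C) = min_{‖x‖=1} ‖Cx‖`. -/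
def sigmaMin {n : ℕ} (C : Matrix (Fin n) (Fin n) ℂ) : ℝ :=
  sInf { a : ℝ | ∃ x : EuclideanSpace ℂ (Fin n), ‖x‖ = 1 ∧ a = ‖mapply C x‖ }

/-- The spectrum `Λ(C)` of a matrix: the set of eigenvalues. -/
def eigs {n : ℕ} (C : Matrix (Fin n) (Fin n) ℂ) : Set ℂ :=
  { μ : ℂ | ∃ v : Fin n → ℂ, v ≠ 0 ∧ C.mulVec v = μ • v }

end SRGDefs


noncomputable section AuxSRG
open Finset
variable {n : ℕ}

lemma mapply_mul (B C : Matrix (Fin n) (Fin n) ℂ) (x : EuclideanSpace ℂ (Fin n)) :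
    mapply (B * C) x = mapply B (mapply C x) := by
  simp [mapply, Matrix.toEuclideanLin_apply, Matrix.mulVec_mulVec]

lemma angleStd_def' (x y : EuclideanSpace ℂ (Fin n)) (hx : x ≠ 0) (hy : y ≠ 0) :
    angleStd x y = Real.arccos ((inner ℂ x y : ℂ).re / (‖x‖ * ‖y‖)) := by
  unfold angleStd; rw [if_neg (by simp [hx, hy])]

lemma angleStd_nonneg (x y : EuclideanSpace ℂ (Fin n)) : 0 ≤ angleStd x y := by
  unfold angleStd; split
  · exact le_refl 0
  · exact Real.arccos_nonneg _

lemma angleStd_le_pi (x y : EuclideanSpace ℂ (Fin n)) : angleStd x y ≤ Real.pi := by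
  unfold angleStd; split
  · exact Real.pi_pos.le
  · exact Real.arccos_le_pi _

lemma ofReal_mul_re' (a : ℝ) (z : ℂ) : (((a:ℝ) : ℂ) * z).re = a * z.re := by
  rw [Complex.mul_re, Complex.ofReal_re, Complex.ofReal_im]; ring

lemma my_arccos_le_arccos {x y : ℝ} (h : x ≤ y) : Real.arccos y ≤ Real.arccos x := by
  rw [Real.arccos_eq_pi_div_two_sub_arcsin, Real.arccos_eq_pi_div_two_sub_arcsin]
  linarith [Real.monotone_arcsin h]

lemma angleStd_comm (x y : EuclideanSpace ℂ (Fin n)) : angleStd x y = angleStd y x := by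
  by_cases h : x = 0 ∨ y = 0
  · unfold angleStd; rw [if_pos h, if_pos h.symm]
  · push_neg at h
    rw [angleStd_def' x y h.1 h.2, angleStd_def' y x h.2 h.1]
    congr 1
    rw [← inner_conj_symm x y, Complex.conj_re]
    simp [mul_comm]

lemma angleStd_smul_smul (c : ℂ) (hc : c ≠ 0) (x y : EuclideanSpace ℂ (Fin n))
    (hx : x ≠ 0) (hy : y ≠ 0) :
    angleStd (c • x) (c • y) = angleStd x y := by
  have hcx : c • x ≠ 0 := smul_ne_zero hc hx
  have hcy : c • y ≠ 0 := smul_ne_zero hc hy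
  rw [angleStd_def' _ _ hcx hcy, angleStd_def' x y hx hy]
  congr 1
  have h2 : (inner ℂ (c • x) (c • y) : ℂ) = ((‖c‖^2 : ℝ) : ℂ) * (inner ℂ x y : ℂ) := by
    rw [inner_smul_left, inner_smul_right, ← mul_assoc]
    congr 1
    rw [mul_comm, Complex.mul_conj]
    push_cast [Complex.sq_norm]; ring
  rw [h2, norm_smul, norm_smul, ofReal_mul_re']
  have hca : (0:ℝ) < ‖c‖ := norm_pos_iff.mpr hc
  have hx' : (0:ℝ) < ‖x‖ := norm_pos_iff.mpr hx
  have hy' : (0:ℝ) < ‖y‖ := norm_pos_iff.mpr hy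
  field_simp

lemma angleStd_neg_right (x y : EuclideanSpace ℂ (Fin n)) (hx : x ≠ 0) (hy : y ≠ 0) :
    angleStd x (-y) = Real.pi - angleStd x y := by
  rw [angleStd_def' x (-y) hx (neg_ne_zero.mpr hy), angleStd_def' x y hx hy]
  rw [inner_neg_right, norm_neg, Complex.neg_re, neg_div, Real.arccos_neg]

lemma angleStd_smul_real (r : ℝ) (hr : 0 < r) (x y : EuclideanSpace ℂ (Fin n))
    (hx : x ≠ 0) (hy : y ≠ 0) :
    angleStd ((r : ℂ) • x) y = angleStd x y := by
  have hrx : (r:ℂ) • x ≠ 0 := smul_ne_zero (by exact_mod_cast hr.ne') hx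
  rw [angleStd_def' _ y hrx hy, angleStd_def' x y hx hy]
  congr 1
  have h1 : (inner ℂ ((r:ℂ) • x) y : ℂ) = ((r:ℝ) : ℂ) * (inner ℂ x y : ℂ) := by
    rw [inner_smul_left]; norm_num
  rw [h1, norm_smul, ofReal_mul_re', Complex.norm_real, Real.norm_eq_abs, abs_of_pos hr]
  have hx' : (0:ℝ) < ‖x‖ := norm_pos_iff.mpr hx
  have hy' : (0:ℝ) < ‖y‖ := norm_pos_iff.mpr hy
  field_simp

lemma angleStd_smul_real_right (r : ℝ) (hr : 0 < r) (x y : EuclideanSpace ℂ (Fin n))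
    (hx : x ≠ 0) (hy : y ≠ 0) :
    angleStd x ((r : ℂ) • y) = angleStd x y := by
  rw [angleStd_comm, angleStd_smul_real r hr y x hy hx, angleStd_comm]

lemma angleStd_self (x : EuclideanSpace ℂ (Fin n)) : angleStd x x = 0 := by
  by_cases hx : x = 0
  · unfold angleStd; rw [if_pos (Or.inl hx)]
  · rw [angleStd_def' x x hx hx]
    have hx' : (0:ℝ) < ‖x‖ := norm_pos_iff.mpr hx
    have : (inner ℂ x x : ℂ).re = ‖x‖ ^ 2 := by
      simpa using inner_self_eq_norm_sq (𝕜 := ℂ) x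
    rw [this]
    rw [show ‖x‖ ^ 2 / (‖x‖ * ‖x‖) = 1 by field_simp]
    exact Real.arccos_one

lemma angleStd_neg_self (v : EuclideanSpace ℂ (Fin n)) (hv : v ≠ 0) :
    angleStd (-v) v = Real.pi := by
  rw [angleStd_def' (-v) v (neg_ne_zero.mpr hv) hv]
  have hx' : (0:ℝ) < ‖v‖ := norm_pos_iff.mpr hv
  have : (inner ℂ (-v) v : ℂ).re = -(‖v‖ ^ 2) := by
    rw [inner_neg_left, Complex.neg_re]
    have h2 : (inner ℂ v v : ℂ).re = ‖v‖ ^ 2 := by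
      simpa using inner_self_eq_norm_sq (𝕜 := ℂ) v
    rw [h2]
  rw [this, norm_neg]
  rw [show -(‖v‖ ^ 2) / (‖v‖ * ‖v‖) = -1 by field_simp]
  exact Real.arccos_neg_one

lemma unit_norm_sq (a b : EuclideanSpace ℂ (Fin n)) (ha : ‖a‖ = 1) (hb : ‖b‖ = 1) :
    ‖a - (((inner ℂ a b : ℂ).re : ℝ) : ℂ) • b‖ ^ 2 = 1 - (inner ℂ a b : ℂ).re ^ 2 := by
  set p := (inner ℂ a b : ℂ).re with hp
  rw [norm_sub_sq (𝕜 := ℂ), ha]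
  have h1 : RCLike.re (inner ℂ a ((((p:ℝ)) : ℂ) • b) : ℂ) = p * p := by
    rw [inner_smul_right]
    have : RCLike.re ((((p:ℝ)) : ℂ) * (inner ℂ a b : ℂ)) = p * (inner ℂ a b : ℂ).re := by
      rw [RCLike.re_to_complex]; exact ofReal_mul_re' p _
    rw [this, ← hp]
  have h2 : ‖(((p:ℝ)) : ℂ) • b‖ ^ 2 = p ^ 2 := by
    rw [norm_smul, hb, mul_one, Complex.norm_real, Real.norm_eq_abs]
    exact sq_abs p
  rw [h1, h2]; ring

lemma core_est (a b c : EuclideanSpace ℂ (Fin n)) (ha : ‖a‖ = 1) (hb : ‖b‖ = 1) (hc : ‖c‖ = 1) :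
    (inner ℂ a b : ℂ).re * (inner ℂ b c : ℂ).re
      - Real.sqrt (1 - (inner ℂ a b : ℂ).re ^ 2) * Real.sqrt (1 - (inner ℂ b c : ℂ).re ^ 2)
      ≤ (inner ℂ a c : ℂ).re := by
  set p := (inner ℂ a b : ℂ).re with hp
  set q := (inner ℂ b c : ℂ).re with hq
  set a' := a - ((p:ℝ) : ℂ) • b with ha'
  set c' := c - ((q:ℝ) : ℂ) • b with hc'
  have e1 : (inner ℂ a' c' : ℂ)
      = (inner ℂ a c : ℂ) - (q:ℂ) * (inner ℂ a b : ℂ) - (p:ℂ) * (inner ℂ b c : ℂ) + (p:ℂ) * (q:ℂ) := by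
    simp only [ha', hc', inner_sub_left, inner_sub_right, inner_smul_left, inner_smul_right,
      inner_self_eq_norm_sq_to_K, hb]
    rw [Complex.conj_ofReal]
    push_cast
    ring
  have hip : (inner ℂ a' c' : ℂ).re = (inner ℂ a c : ℂ).re - p * q := by
    rw [e1]
    simp only [Complex.add_re, Complex.sub_re, ofReal_mul_re', Complex.ofReal_re]
    rw [← hp, ← hq]
    ring
  have hna : ‖a'‖ = Real.sqrt (1 - p ^ 2) := by
    rw [← Real.sqrt_sq (norm_nonneg a'), ha', unit_norm_sq a b ha hb]
  have hnc : ‖c'‖ = Real.sqrt (1 - q ^ 2) := by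
    have := unit_norm_sq c b hc hb
    rw [← Real.sqrt_sq (norm_nonneg c'), hc']
    rw [show (inner ℂ c b : ℂ).re = q by rw [← inner_conj_symm c b, Complex.conj_re]] at this
    rw [this]
  have hcs : |(inner ℂ a' c' : ℂ).re| ≤ ‖a'‖ * ‖c'‖ := by
    calc |(inner ℂ a' c' : ℂ).re| ≤ ‖(inner ℂ a' c' : ℂ)‖ := Complex.abs_re_le_norm _
    _ = ‖(inner ℂ a' c' : ℂ)‖ := rfl
    _ ≤ ‖a'‖ * ‖c'‖ := norm_inner_le_norm a' c'
  have := (abs_le.mp hcs).1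
  rw [hip, hna, hnc] at this
  linarith

lemma angleStd_triangle_unit (a b c : EuclideanSpace ℂ (Fin n))
    (ha : ‖a‖ = 1) (hb : ‖b‖ = 1) (hc : ‖c‖ = 1) :
    angleStd a c ≤ angleStd a b + angleStd b c := by
  have ha0 : a ≠ 0 := by intro h; rw [h] at ha; simp at ha
  have hb0 : b ≠ 0 := by intro h; rw [h] at hb; simp at hb
  have hc0 : c ≠ 0 := by intro h; rw [h] at hc; simp at hc
  set p := (inner ℂ a b : ℂ).re with hp
  set q := (inner ℂ b c : ℂ).re with hq
  set R := (inner ℂ a c : ℂ).re with hR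
  have hab : angleStd a b = Real.arccos p := by
    rw [angleStd_def' a b ha0 hb0, ha, hb, ← hp]; norm_num
  have hbc : angleStd b c = Real.arccos q := by
    rw [angleStd_def' b c hb0 hc0, hb, hc, ← hq]; norm_num
  have hac : angleStd a c = Real.arccos R := by
    rw [angleStd_def' a c ha0 hc0, ha, hc, ← hR]; norm_num
  by_cases hcase : Real.pi ≤ angleStd a b + angleStd b c
  · exact le_trans (angleStd_le_pi a c) hcase
  · push_neg at hcase
    have hsum0 : 0 ≤ angleStd a b + angleStd b c := by
      rw [hab, hbc]
      exact add_nonneg (Real.arccos_nonneg _) (Real.arccos_nonneg _)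
    have hbp : |p| ≤ 1 := by
      have := norm_inner_le_norm (𝕜 := ℂ) a b
      rw [ha, hb, mul_one] at this
      exact le_trans (Complex.abs_re_le_norm _) this
    have hbq : |q| ≤ 1 := by
      have := norm_inner_le_norm (𝕜 := ℂ) b c
      rw [hb, hc, mul_one] at this
      exact le_trans (Complex.abs_re_le_norm _) this
    have hcos : Real.cos (angleStd a b + angleStd b c) ≤ R := by
      rw [Real.cos_add, hab, hbc,
        Real.cos_arccos (abs_le.mp hbp).1 (abs_le.mp hbp).2,
        Real.cos_arccos (abs_le.mp hbq).1 (abs_le.mp hbq).2,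
        Real.sin_arccos, Real.sin_arccos]
      exact core_est a b c ha hb hc
    calc angleStd a c = Real.arccos R := hac
    _ ≤ Real.arccos (Real.cos (angleStd a b + angleStd b c)) := my_arccos_le_arccos hcos
    _ = angleStd a b + angleStd b c := Real.arccos_cos hsum0 hcase.le

lemma norm_inv_smul_unit (a : EuclideanSpace ℂ (Fin n)) (ha : a ≠ 0) :
    ‖((‖a‖⁻¹ : ℝ) : ℂ) • a‖ = 1 := by
  have hna : (0:ℝ) < ‖a‖ := norm_pos_iff.mpr ha
  rw [norm_smul, Complex.norm_real, Real.norm_eq_abs, abs_of_pos (inv_pos.mpr hna),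
    inv_mul_cancel₀ hna.ne']

lemma angleStd_triangle (a b c : EuclideanSpace ℂ (Fin n))
    (ha : a ≠ 0) (hb : b ≠ 0) (hc : c ≠ 0) :
    angleStd a c ≤ angleStd a b + angleStd b c := by
  have hna : (0:ℝ) < ‖a‖ := norm_pos_iff.mpr ha
  have hnb : (0:ℝ) < ‖b‖ := norm_pos_iff.mpr hb
  have hnc : (0:ℝ) < ‖c‖ := norm_pos_iff.mpr hc
  set ua := ((‖a‖⁻¹ : ℝ) : ℂ) • a with hua
  set ub := ((‖b‖⁻¹ : ℝ) : ℂ) • b with hub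
  set uc := ((‖c‖⁻¹ : ℝ) : ℂ) • c with huc
  have hua1 : ‖ua‖ = 1 := norm_inv_smul_unit a ha
  have hub1 : ‖ub‖ = 1 := norm_inv_smul_unit b hb
  have huc1 : ‖uc‖ = 1 := norm_inv_smul_unit c hc
  have hua0 : ua ≠ 0 := by intro h; rw [h] at hua1; simp at hua1
  have hub0 : ub ≠ 0 := by intro h; rw [h] at hub1; simp at hub1
  have huc0 : uc ≠ 0 := by intro h; rw [h] at huc1; simp at huc1
  have e1 : angleStd ua uc = angleStd a c := by
    rw [hua, huc, angleStd_smul_real _ (inv_pos.mpr hna) a _ ha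
      (smul_ne_zero (by exact_mod_cast (inv_pos.mpr hnc).ne') hc),
      angleStd_smul_real_right _ (inv_pos.mpr hnc) a c ha hc]
  have e2 : angleStd ua ub = angleStd a b := by
    rw [hua, hub, angleStd_smul_real _ (inv_pos.mpr hna) a _ ha
      (smul_ne_zero (by exact_mod_cast (inv_pos.mpr hnb).ne') hb),
      angleStd_smul_real_right _ (inv_pos.mpr hnb) a b ha hb]
  have e3 : angleStd ub uc = angleStd b c := by
    rw [hub, huc, angleStd_smul_real _ (inv_pos.mpr hnb) b _ hb
      (smul_ne_zero (by exact_mod_cast (inv_pos.mpr hnc).ne') hc),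
      angleStd_smul_real_right _ (inv_pos.mpr hnc) b c hb hc]
  rw [← e1, ← e2, ← e3]
  exact angleStd_triangle_unit ua ub uc hua1 hub1 huc1

lemma angleStd_chain (y : ℕ → EuclideanSpace ℂ (Fin n)) (M : ℕ)
    (hy : ∀ i, i ≤ M → y i ≠ 0) :
    angleStd (y 0) (y M) ≤ ∑ i ∈ Finset.range M, angleStd (y i) (y (i + 1)) := by
  induction M with
  | zero => rw [angleStd_self]; simp
  | succ M ih =>
    rw [Finset.sum_range_succ]
    have h1 := ih (fun i hi => hy i (le_trans hi (Nat.le_succ M)))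
    have h2 := angleStd_triangle (y 0) (y M) (y (M + 1))
      (hy 0 (by omega)) (hy M (by omega)) (hy (M + 1) le_rfl)
    linarith

lemma exists_clamped {ι : Type*} (s : Finset ι) (b : ι → ℝ) :
    ∀ τ : ℝ, (∀ i ∈ s, 0 ≤ b i) → |τ| ≤ ∑ i ∈ s, b i →
    ∃ t : ι → ℝ, (∀ i ∈ s, |t i| ≤ b i) ∧ ∑ i ∈ s, t i = τ := by
  induction s using Finset.cons_induction with
  | empty =>
    intro τ _ hτ
    refine ⟨fun _ => 0, by simp, ?_⟩
    simp only [Finset.sum_empty]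
    have h0 : τ = 0 := abs_nonpos_iff.mp (by simpa using hτ)
    exact h0.symm
  | cons a s ha ih =>
    intro τ hb hτ
    rw [Finset.sum_cons] at hτ
    have hB : 0 ≤ ∑ i ∈ s, b i :=
      Finset.sum_nonneg fun i hi => hb i (Finset.mem_cons_of_mem hi)
    have hba : 0 ≤ b a := hb a (Finset.mem_cons_self a s)
    set B := ∑ i ∈ s, b i with hBdef
    set ta := max (-(b a)) (min (b a) τ) with hta
    have h1 : |ta| ≤ b a := by
      rw [abs_le]
      constructor
      · exact le_max_left _ _
      · exact max_le (by linarith) (min_le_left _ _)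
    have hup : ta ≤ τ + B := by
      apply max_le
      · linarith [(abs_le.mp hτ).1]
      · linarith [min_le_right (b a) τ]
    have hlo : τ - B ≤ ta := by
      rcases le_total τ (b a) with h | h
      · have hm : min (b a) τ = τ := min_eq_right h
        calc τ - B ≤ min (b a) τ := by rw [hm]; linarith
        _ ≤ ta := le_max_right _ _
      · have hm : min (b a) τ = b a := min_eq_left h
        calc τ - B ≤ min (b a) τ := by rw [hm]; linarith [(abs_le.mp hτ).2]
        _ ≤ ta := le_max_right _ _
    have h2 : |τ - ta| ≤ B := abs_le.mpr ⟨by linarith, by linarith⟩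
    obtain ⟨t, ht1, ht2⟩ := ih (τ - ta) (fun i hi => hb i (Finset.mem_cons_of_mem hi)) h2
    refine ⟨Function.update t a ta, ?_, ?_⟩
    · intro i hi
      by_cases hia : i = a
      · subst hia; rw [Function.update_self]; exact h1
      · rw [Function.update_of_ne hia]
        exact ht1 i ((Finset.mem_cons.mp hi).resolve_left hia)
    · rw [Finset.sum_cons, Function.update_self, Finset.sum_update_of_notMem ha, ht2]
      ring

end AuxSRG


noncomputable section AuxSRG2
open Finset
variable {n : ℕ}

lemma exp_ofReal_add_pi (t : ℝ) :
    Complex.exp ((↑(Real.pi + t) : ℂ) * Complex.I) = -Complex.exp ((↑t : ℂ) * Complex.I) := by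
  push_cast
  rw [add_mul, Complex.exp_add, Complex.exp_pi_mul_I]
  ring

lemma abs_rexp (r θ : ℝ) (hr : 0 ≤ r) :
    ‖(r : ℂ) * Complex.exp ((θ : ℂ) * Complex.I)‖ = r := by
  rw [norm_mul, Complex.norm_real, Complex.norm_exp_ofReal_mul_I, mul_one, Real.norm_eq_abs,
    _root_.abs_of_nonneg hr]

lemma arg_rexp (r θ : ℝ) (hr : 0 < r) (h1 : -Real.pi < θ) (h2 : θ ≤ Real.pi) :
    ((r : ℂ) * Complex.exp ((θ : ℂ) * Complex.I)).arg = θ := by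
  rw [Complex.exp_mul_I, Complex.arg_real_mul _ hr]
  exact Complex.arg_cos_add_sin_mul_I ⟨h1, h2⟩

lemma mem_plus_arc {S : Set ℂ} (hS : ∀ z ∈ S, arcPlus0 z ⊆ S) {r θ : ℝ} (hr : 0 < r)
    (hθ0 : 0 ≤ θ) (hθπ : θ ≤ Real.pi)
    (hz : (r : ℂ) * Complex.exp ((θ : ℂ) * Complex.I) ∈ S)
    (t : ℝ) (ht : |t| ≤ θ) :
    (r : ℂ) * Complex.exp ((t : ℂ) * Complex.I) ∈ S := by
  by_cases h0 : θ = 0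
  · have ht0 : t = 0 := by
      have h1 : |t| ≤ 0 := by rw [← h0]; exact ht
      exact abs_nonpos_iff.mp h1
    rw [ht0, ← h0]
    exact hz
  · have hθpos : 0 < θ := lt_of_le_of_ne hθ0 (Ne.symm h0)
    apply hS _ hz
    refine ⟨t / θ, ⟨?_, ?_⟩, ?_⟩
    · rw [le_div_iff₀ hθpos]; linarith [(abs_le.mp ht).1]
    · rw [div_le_one hθpos]; exact le_trans (le_abs_self t) ht
    · rw [abs_rexp r θ hr.le, arg_rexp r θ hr (by linarith [Real.pi_pos]) hθπ,
        div_mul_cancel₀ t h0]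

lemma mem_minus_arc {S : Set ℂ} (hS : ∀ z ∈ S, arcMinus0 z ⊆ S) {r θ : ℝ} (hr : 0 < r)
    (hθ0 : 0 ≤ θ) (hθπ : θ ≤ Real.pi)
    (hz : (r : ℂ) * Complex.exp ((θ : ℂ) * Complex.I) ∈ S)
    (t : ℝ) (ht : |t| ≤ Real.pi - θ) :
    (r : ℂ) * Complex.exp ((↑(Real.pi + t) : ℂ) * Complex.I) ∈ S := by
  set z := (r : ℂ) * Complex.exp ((θ : ℂ) * Complex.I) with hzdef
  have habs : ‖-z‖ = r := by
    rw [norm_neg, hzdef, abs_rexp r θ hr.le]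
  have key : ∃ μ : ℝ, μ ∈ Set.Icc (-1 : ℝ) 1 ∧ μ * (-z).arg = t := by
    by_cases h0 : θ = 0
    · have hzr : -z = ((-r : ℝ) : ℂ) := by
        rw [hzdef, h0]
        push_cast
        simp
      have harg : (-z).arg = Real.pi := by
        rw [hzr]
        exact Complex.arg_ofReal_of_neg (by linarith)
      refine ⟨t / Real.pi, ⟨?_, ?_⟩, ?_⟩
      · rw [le_div_iff₀ Real.pi_pos]
        have := (abs_le.mp ht).1
        rw [h0] at this
        linarith
      · rw [div_le_one Real.pi_pos]
        have := (abs_le.mp ht).2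
        rw [h0] at this
        linarith [le_abs_self t]
      · rw [harg, div_mul_cancel₀ t Real.pi_pos.ne']
    · have hθpos : 0 < θ := lt_of_le_of_ne hθ0 (Ne.symm h0)
      have hz2 : -z = (r : ℂ) * Complex.exp ((↑(θ - Real.pi) : ℂ) * Complex.I) := by
        have h2 : Complex.exp ((θ : ℂ) * Complex.I)
            = -Complex.exp ((↑(θ - Real.pi) : ℂ) * Complex.I) := by
          have h3 := exp_ofReal_add_pi (θ - Real.pi)
          rw [show Real.pi + (θ - Real.pi) = θ by ring] at h3
          rw [show ((θ : ℝ) : ℂ) = ((θ : ℝ) : ℂ) from rfl]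
          exact_mod_cast h3
        rw [hzdef, h2]
        ring
      have harg : (-z).arg = θ - Real.pi := by
        rw [hz2]
        exact arg_rexp r (θ - Real.pi) hr (by linarith) (by linarith [Real.pi_pos])
      by_cases hπ : θ = Real.pi
      · have ht0 : t = 0 := abs_nonpos_iff.mp (by rw [hπ] at ht; simpa using ht)
        exact ⟨0, ⟨by norm_num, by norm_num⟩, by rw [ht0]; ring⟩
      · have hlt : θ < Real.pi := lt_of_le_of_ne hθπ hπ
        refine ⟨t / (θ - Real.pi), ⟨?_, ?_⟩, ?_⟩
        · rw [le_div_iff_of_neg (by linarith : θ - Real.pi < 0)]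
          have := (abs_le.mp ht).2
          linarith
        · rw [div_le_iff_of_neg (by linarith : θ - Real.pi < 0)]
          have := (abs_le.mp ht).1
          linarith
        · rw [harg, div_mul_cancel₀ t (by intro hc; exact hπ (by linarith))]
  obtain ⟨μ, hμ, hμt⟩ := key
  apply hS z hz
  show _ ∈ -(arcPlus0 (-z))
  rw [Set.mem_neg]
  refine ⟨μ, hμ, ?_⟩
  rw [habs, hμt, exp_ofReal_add_pi t]
  ring

lemma mem_SRGstdSet_of {𝒜 : Set (Matrix (Fin n) (Fin n) ℂ)} {A : Matrix (Fin n) (Fin n) ℂ}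
    (hA : A ∈ 𝒜) {w : ℂ} (hw : w ∈ SRGstd A) : w ∈ SRGstdSet 𝒜 :=
  Set.mem_biUnion hA hw

lemma prod_div_telescope (f : ℕ → ℝ) (hf : ∀ j, f j ≠ 0) (N : ℕ) :
    ∏ j ∈ Finset.range N, f j / f (j + 1) = f 0 / f N := by
  induction N with
  | zero => simp [div_self (hf 0)]
  | succ N ih =>
    rw [Finset.prod_range_succ, ih]
    field_simp
    rw [mul_comm (f 0) (f N), mul_div_mul_left _ _ (hf N)]

lemma exp_nat_pi (M : ℕ) :
    Complex.exp ((↑((M : ℝ) * Real.pi) : ℂ) * Complex.I) = (-1 : ℂ) ^ M := by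
  push_cast
  rw [mul_assoc, Complex.exp_nat_mul, Complex.exp_pi_mul_I]

end AuxSRG2

/-- cyclic matrix interconnection via standard SRGs. -/
theorem stmt1 {n N : ℕ} (A : Fin N → Matrix (Fin n) (Fin n) ℂ)
    (𝒜 : Fin N → Set (Matrix (Fin n) (Fin n) ℂ)) (hmem : ∀ i, A i ∈ 𝒜 i) (k : Fin N)
    (harc : ∀ i, i ≠ k → arcPropStd (𝒜 i))
    (h : (-1 : ℂ) ∉ ∏ i, SRGstdSet (𝒜 i)) :
    IsUnit (1 + (List.ofFn A).prod) := by
  classical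
  by_contra hunit
  -- extract an eigenvector for eigenvalue -1
  set P := (List.ofFn A).prod with hPdef
  have hdet : (1 + P).det = 0 := by
    by_contra hd
    exact hunit ((Matrix.isUnit_iff_isUnit_det _).mpr (Ne.isUnit hd))
  obtain ⟨v, hv0, hv⟩ := Matrix.exists_mulVec_eq_zero_iff.mpr hdet
  have hPv : P.mulVec v = -v := by
    rw [Matrix.add_mulVec, Matrix.one_mulVec] at hv
    rwa [add_comm, add_eq_zero_iff_eq_neg] at hv
  set ve : EuclideanSpace ℂ (Fin n) := (WithLp.equiv 2 (Fin n → ℂ)).symm v with hvedef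
  have hve0 : ve ≠ 0 := by
    intro hz
    apply hv0
    have h2 := congrArg (WithLp.equiv 2 (Fin n → ℂ)) hz
    rw [hvedef] at h2
    simpa using h2
  -- the chain of vectors
  set x : ℕ → EuclideanSpace ℂ (Fin n) :=
    fun j => mapply ((List.ofFn A).drop j).prod ve with hxdef
  have hx0 : x 0 = -ve := by
    simp only [hxdef, List.drop_zero, ← hPdef, hvedef]
    simp [mapply, Matrix.toEuclideanLin_apply, hPv]
  have hxN : ∀ j, N ≤ j → x j = ve := by
    intro j hj
    simp only [hxdef]
    rw [List.drop_eq_nil_of_le (by simpa using hj), List.prod_nil]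
    simp [mapply, Matrix.toEuclideanLin_apply]
  have hstep : ∀ i : Fin N, mapply (A i) (x (↑i + 1)) = x ↑i := by
    intro i
    simp only [hxdef]
    rw [← mapply_mul]
    congr 1
    have hlen : (↑i : ℕ) < (List.ofFn A).length := by simpa using i.isLt
    rw [List.drop_eq_getElem_cons hlen, List.prod_cons, List.getElem_ofFn]
  have hx0ne : x 0 ≠ 0 := by rw [hx0]; exact neg_ne_zero.mpr hve0
  have hall : ∀ j, x j ≠ 0 := by
    intro j
    by_cases hj : N ≤ j
    · rw [hxN j hj]; exact hve0
    · intro hz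
      apply hx0ne
      have hsplit : x 0 = mapply ((List.ofFn A).take j).prod (x j) := by
        simp only [hxdef, List.drop_zero]
        conv_lhs => rw [← List.take_append_drop j (List.ofFn A)]
        rw [List.prod_append, mapply_mul]
      rw [hsplit, hz]
      simp [mapply]
  -- angles and moduli
  set θn : ℕ → ℝ := fun j => angleStd (x (j + 1)) (x j) with hθn
  have hθ0 : ∀ j, 0 ≤ θn j := fun j => angleStd_nonneg _ _
  have hθπ : ∀ j, θn j ≤ Real.pi := fun j => angleStd_le_pi _ _
  set rr : Fin N → ℝ := fun i => ‖x ↑i‖ / ‖x (↑i + 1)‖ with hrr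
  have hrpos : ∀ i : Fin N, 0 < rr i := fun i =>
    div_pos (norm_pos_iff.mpr (hall _)) (norm_pos_iff.mpr (hall _))
  have hzmem : ∀ i : Fin N,
      (↑(rr i) : ℂ) * Complex.exp ((↑(θn ↑i) : ℂ) * Complex.I) ∈ SRGstd (A i) := by
    intro i
    refine ⟨x (↑i + 1), hall _, Or.inl ?_⟩
    rw [hstep i]
  have hzS : ∀ i : Fin N,
      (↑(rr i) : ℂ) * Complex.exp ((↑(θn ↑i) : ℂ) * Complex.I) ∈ SRGstdSet (𝒜 i) :=
    fun i => mem_SRGstdSet_of (hmem i) (hzmem i)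
  -- plus/minus bookkeeping
  set isP : Fin N → Prop :=
    fun i => ∀ z ∈ SRGstdSet (𝒜 i), arcPlus0 z ⊆ SRGstdSet (𝒜 i) with hisP
  set m : ℕ := ((Finset.univ.erase k).filter (fun i => ¬ isP i)).card with hm
  set flip : Fin N → Prop := fun i => if i = k then Odd m else ¬ isP i with hflipdef
  set θ' : Fin N → ℝ := fun i => if flip i then Real.pi - θn ↑i else θn ↑i with hθ'
  have hθ'0 : ∀ i, 0 ≤ θ' i := by
    intro i
    simp only [hθ']
    split_ifs
    · linarith [hθπ (↑i : ℕ)]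
    · exact hθ0 _
  set cnt : ℕ → ℕ := fun j => ∑ i : Fin N, if ((i : ℕ) < j ∧ flip i) then 1 else 0 with hcnt
  set ε : ℕ → ℂ := fun j => (-1 : ℂ) ^ cnt j with hε
  set y : ℕ → EuclideanSpace ℂ (Fin n) := fun j => ε j • x j with hy
  have hεne : ∀ j, ε j ≠ 0 := by
    intro j
    simp only [hε]
    exact pow_ne_zero _ (by norm_num)
  have hcnt0 : cnt 0 = 0 := by simp [hcnt]
  have hcntstep : ∀ i : Fin N, cnt (↑i + 1) = cnt ↑i + (if flip i then 1 else 0) := by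
    intro i
    simp only [hcnt]
    have hsplit : ∀ a : Fin N, (if ((a : ℕ) < ↑i + 1 ∧ flip a) then (1 : ℕ) else 0)
        = (if ((a : ℕ) < ↑i ∧ flip a) then 1 else 0)
          + (if (a = i ∧ flip a) then 1 else 0) := by
      intro a
      simp only [Fin.ext_iff]
      by_cases hf : flip a
      · simp only [hf, and_true]
        split_ifs <;> omega
      · simp [hf]
    rw [Finset.sum_congr rfl (fun a _ => hsplit a), Finset.sum_add_distrib]
    congr 1
    have h2 : ∀ a : Fin N, (if (a = i ∧ flip a) then (1 : ℕ) else 0)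
        = if a = i then (if flip a then 1 else 0) else 0 := by
      intro a
      by_cases ha : a = i <;> by_cases hf : flip a <;> simp [ha, hf]
    rw [Finset.sum_congr rfl (fun a _ => h2 a),
      Finset.sum_ite_eq' Finset.univ i (fun a => if flip a then 1 else 0)]
    simp
  have hεstep : ∀ i : Fin N, ε (↑i + 1) = ε ↑i * (if flip i then (-1 : ℂ) else 1) := by
    intro i
    simp only [hε]
    rw [hcntstep i, pow_add]
    congr 1
    split_ifs <;> simp
  have hy0 : y 0 = -ve := by
    simp only [hy, hε, hcnt0, pow_zero, one_smul]
    exact hx0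
  have hyN : y N = ve := by
    have hEven : Even (cnt N) := by
      have e0 : ∀ a : Fin N, (if ((a : ℕ) < N ∧ flip a) then (1 : ℕ) else 0)
          = if flip a then 1 else 0 := fun a => by simp [a.isLt]
      have e1 : cnt N = ∑ i : Fin N, if flip i then (1 : ℕ) else 0 := by
        simp only [hcnt]
        exact Finset.sum_congr rfl (fun a _ => e0 a)
      have e1' : (∑ i : Fin N, if flip i then (1 : ℕ) else 0)
          = (∑ i ∈ Finset.univ.erase k, if flip i then 1 else 0)
            + (if flip k then 1 else 0) :=
        (Finset.sum_erase_add _ _ (Finset.mem_univ k)).symm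
      have e2' : ∀ a ∈ Finset.univ.erase k,
          (if flip a then (1 : ℕ) else 0) = if ¬ isP a then 1 else 0 := fun a ha => by
        simp only [hflipdef]
        simp only [if_neg (Finset.ne_of_mem_erase ha)]
      have e2 : (∑ i ∈ Finset.univ.erase k, if flip i then (1 : ℕ) else 0) = m := by
        rw [Finset.sum_congr rfl e2', hm, Finset.card_filter]
      have e3 : (if flip k then (1 : ℕ) else 0) = if Odd m then 1 else 0 := by
        simp only [hflipdef, eq_self_iff_true, if_true]
      rw [e1, e1', e2, e3]
      rcases Nat.even_or_odd m with he | ho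
      · rw [if_neg (Nat.not_odd_iff_even.mpr he)]
        simpa using he
      · rw [if_pos ho]
        exact ho.add_one
    simp only [hy, hε]
    rw [hEven.neg_one_pow, one_smul, hxN N le_rfl]
  have hyne : ∀ j, y j ≠ 0 := by
    intro j
    simp only [hy]
    exact smul_ne_zero (hεne j) (hall j)
  have hedge : ∀ i : Fin N, angleStd (y ↑i) (y (↑i + 1)) = θ' i := by
    intro i
    have hxi := hall (↑i : ℕ)
    have hxi1 := hall ((↑i : ℕ) + 1)
    have hsm : angleStd (ε ↑i • x ↑i) (ε ↑i • x (↑i + 1)) = θn ↑i := by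
      rw [angleStd_smul_smul (ε ↑i) (hεne _) _ _ hxi hxi1, angleStd_comm]
    simp only [hθ']
    by_cases hf : flip i
    · rw [if_pos hf]
      have hy1 : y (↑i + 1) = -(ε ↑i • x (↑i + 1)) := by
        simp only [hy]
        rw [hεstep i, if_pos hf, mul_neg_one, neg_smul]
      have hyi : y ↑i = ε ↑i • x ↑i := by simp only [hy]
      rw [hyi, hy1, angleStd_neg_right _ _ (smul_ne_zero (hεne _) hxi)
        (smul_ne_zero (hεne _) hxi1), hsm]
    · rw [if_neg hf]
      have hy1 : y (↑i + 1) = ε ↑i • x (↑i + 1) := by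
        simp only [hy]
        rw [hεstep i, if_neg hf, mul_one]
      have hyi : y ↑i = ε ↑i • x ↑i := by simp only [hy]
      rw [hyi, hy1, hsm]
  -- the chain inequality
  have hyangle : angleStd (y 0) (y N) = Real.pi := by
    rw [hy0, hyN]
    exact angleStd_neg_self ve hve0
  have hsum : Real.pi ≤ ∑ i : Fin N, θ' i := by
    calc Real.pi = angleStd (y 0) (y N) := hyangle.symm
    _ ≤ ∑ j ∈ Finset.range N, angleStd (y j) (y (j + 1)) :=
        angleStd_chain y N (fun j _ => hyne j)
    _ = ∑ i : Fin N, angleStd (y ↑i) (y (↑i + 1)) :=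
        (Fin.sum_univ_eq_sum_range (fun j => angleStd (y j) (y (j + 1))) N).symm
    _ = ∑ i : Fin N, θ' i := Finset.sum_congr rfl (fun i _ => hedge i)
  set T := ∑ i ∈ Finset.univ.erase k, θ' i with hTdef
  have hTsum : θ' k + T = ∑ i : Fin N, θ' i :=
    Finset.add_sum_erase _ _ (Finset.mem_univ k)
  set τ : ℝ := if Even m then Real.pi - θn ↑k else -(θn ↑k) with hτ
  have hτT : |τ| ≤ T := by
    rcases Nat.even_or_odd m with he | ho
    · have hfk : ¬ flip k := by
        simp only [hflipdef, if_pos rfl]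
        exact Nat.not_odd_iff_even.mpr he
      have hθ'k : θ' k = θn ↑k := by simp only [hθ']; rw [if_neg hfk]
      rw [hτ, if_pos he, _root_.abs_of_nonneg (by linarith [hθπ (↑k : ℕ)])]
      have := hTsum
      rw [hθ'k] at this
      linarith [hsum]
    · have hfk : flip k := by
        simp only [hflipdef, if_pos rfl]
        exact ho
      have hθ'k : θ' k = Real.pi - θn ↑k := by simp only [hθ']; rw [if_pos hfk]
      rw [hτ, if_neg (Nat.not_even_iff_odd.mpr ho), abs_neg,
        _root_.abs_of_nonneg (hθ0 _)]
      have := hTsum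
      rw [hθ'k] at this
      linarith [hsum]
  obtain ⟨t, ht1, ht2⟩ :=
    exists_clamped (Finset.univ.erase k) θ' τ (fun i _ => hθ'0 i) hτT
  -- building the SRG points
  set φ : Fin N → ℝ :=
    fun i => if i = k then θn ↑k else ((if isP i then 0 else Real.pi) + t i) with hφ
  set w : Fin N → ℂ :=
    fun i => (↑(rr i) : ℂ) * Complex.exp ((↑(φ i) : ℂ) * Complex.I) with hw
  have hwmem : ∀ i, w i ∈ SRGstdSet (𝒜 i) := by
    intro i
    simp only [hw, hφ]
    by_cases hik : i = k
    · rw [if_pos hik]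
      subst hik
      exact hzS i
    · rw [if_neg hik]
      have hti : |t i| ≤ θ' i := ht1 i (Finset.mem_erase.mpr ⟨hik, Finset.mem_univ i⟩)
      have hfi_eq : flip i ↔ ¬ isP i := by
        simp only [hflipdef]
        rw [if_neg hik]
      by_cases hp : isP i
      · rw [if_pos hp, zero_add]
        have hθ'i : θ' i = θn ↑i := by
          simp only [hθ']
          rw [if_neg (fun hfl => (hfi_eq.mp hfl) hp)]
        exact mem_plus_arc hp (hrpos i) (hθ0 _) (hθπ _) (hzS i) (t i) (hθ'i ▸ hti)
      · rw [if_neg hp]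
        have hminus := Or.resolve_left (harc i hik) hp
        have hθ'i : θ' i = Real.pi - θn ↑i := by
          simp only [hθ']
          rw [if_pos (hfi_eq.mpr hp)]
        exact mem_minus_arc hminus (hrpos i) (hθ0 _) (hθπ _) (hzS i) (t i) (hθ'i ▸ hti)
  -- the product is -1
  have hprodw : ∏ i, w i = -1 := by
    have hrw : ∏ i, w i
        = (↑(∏ i, rr i) : ℂ) * Complex.exp ((↑(∑ i, φ i) : ℂ) * Complex.I) := by
      simp only [hw]
      rw [Finset.prod_mul_distrib, ← Complex.ofReal_prod]
      congr 1
      rw [← Complex.exp_sum]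
      congr 1
      rw [← Finset.sum_mul, ← Complex.ofReal_sum]
    have hrprod : ∏ i, rr i = 1 := by
      simp only [hrr]
      calc ∏ i : Fin N, ‖x ↑i‖ / ‖x (↑i + 1)‖
          = ∏ j ∈ Finset.range N, ‖x j‖ / ‖x (j + 1)‖ :=
            Fin.prod_univ_eq_prod_range (fun j => ‖x j‖ / ‖x (j + 1)‖) N
      _ = ‖x 0‖ / ‖x N‖ :=
            prod_div_telescope (fun j => ‖x j‖)
              (fun j => (norm_pos_iff.mpr (hall j)).ne') N
      _ = 1 := by
            rw [hx0, hxN N le_rfl, norm_neg]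
            exact div_self (norm_pos_iff.mpr hve0).ne'
    have hcsum : (∑ i ∈ Finset.univ.erase k, if isP i then (0 : ℝ) else Real.pi)
        = (m : ℝ) * Real.pi := by
      rw [Finset.sum_ite, Finset.sum_const, Finset.sum_const, smul_zero, zero_add,
        nsmul_eq_mul]
    have hφsum : ∑ i, φ i = θn ↑k + ((m : ℝ) * Real.pi + τ) := by
      rw [← Finset.add_sum_erase _ φ (Finset.mem_univ k)]
      congr 1
      · simp [hφ]
      · rw [Finset.sum_congr rfl (fun i hi => by
          simp only [hφ]
          rw [if_neg (Finset.ne_of_mem_erase hi)])]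
        rw [Finset.sum_add_distrib, hcsum, ht2]
    rw [hrw, hrprod, hφsum]
    rcases Nat.even_or_odd m with he | ho
    · rw [hτ, if_pos he]
      rw [show θn ↑k + ((m : ℝ) * Real.pi + (Real.pi - θn ↑k))
          = (((m + 1 : ℕ) : ℝ)) * Real.pi by push_cast; ring]
      rw [exp_nat_pi, Odd.neg_one_pow (Even.add_one he)]
      simp
    · rw [hτ, if_neg (Nat.not_even_iff_odd.mpr ho)]
      rw [show θn ↑k + ((m : ℝ) * Real.pi + -(θn ↑k)) = (((m : ℕ) : ℝ)) * Real.pi by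
        push_cast; ring]
      rw [exp_nat_pi, Odd.neg_one_pow ho]
      simp
  exact h (hprodw ▸ Set.finset_prod_mem_finset_prod Finset.univ _ w (fun i _ => hwmem i))
end

section
/- Let A, B ∈ ℂ^{n×n} with A nonsingular. Suppose there exist θ ∈ ℝ and a set ℬ ⊂ ℂ^{n×n} with B ∈ ℬ such that ℬ satisfies the θ-chord property and 0 ∉ SRG_θ(A^{−1}) + SRG_θ(ℬ) (elementwise sum of sets of complex numbers). Then I + AB is nonsingular. -/
open scoped Pointwise Classical
open Complex

private lemma angleTheta_neg_right {n : ℕ} (θ : ℝ) (x y : EuclideanSpace ℂ (Fin n))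
    (hx : x ≠ 0) (hy : y ≠ 0) : angleTheta θ x (-y) = Real.pi - angleTheta θ x y := by
  unfold angleTheta
  rw [if_neg (by simp [hx, hy]), if_neg (by simp [hx, hy])]
  rw [smul_neg, inner_neg_right]
  simp only [Complex.neg_re, norm_neg, neg_div, Real.arccos_neg]

/-- two-component condition via chord-property sum separation. -/
theorem stmt3 {n : ℕ} (A B : Matrix (Fin n) (Fin n) ℂ) (hA : IsUnit A) (θ : ℝ)
    (ℬ : Set (Matrix (Fin n) (Fin n) ℂ)) (hB : B ∈ ℬ) (hchord : chordProp θ ℬ)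
    (h : (0 : ℂ) ∉ SRGt θ A⁻¹ + SRGtSet θ ℬ) :
    IsUnit (1 + A * B) := by
  by_contra hu
  have hdet : (1 + A * B).det = 0 := by
    by_contra hd
    exact hu ((Matrix.isUnit_iff_isUnit_det _).mpr (isUnit_iff_ne_zero.mpr hd))
  obtain ⟨v, hv, hvz⟩ := (Matrix.exists_mulVec_eq_zero_iff).mpr hdet
  set x : EuclideanSpace ℂ (Fin n) := (WithLp.equiv 2 (Fin n → ℂ)).symm v with hxdef
  have hx : x ≠ 0 := by simpa [hxdef] using hv
  have hABv : A.mulVec (B.mulVec v) = -v := by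
    have h0 : v + A.mulVec (B.mulVec v) = 0 := by
      simpa [Matrix.add_mulVec, Matrix.one_mulVec, Matrix.mulVec_mulVec] using hvz
    have := eq_neg_of_add_eq_zero_right h0
    linear_combination this
  have hBv : B.mulVec v ≠ 0 := by
    intro hz
    apply hv
    have : A.mulVec (B.mulVec v) = 0 := by rw [hz]; simp
    rw [hABv] at this
    simpa using this.symm
  have hAinv : A⁻¹.mulVec v = -(B.mulVec v) := by
    have hinv : A⁻¹ * A = 1 := Matrix.nonsing_inv_mul A (A.isUnit_iff_isUnit_det.mp hA)
    calc A⁻¹.mulVec v = A⁻¹.mulVec (-(A.mulVec (B.mulVec v))) := by rw [hABv, neg_neg]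
    _ = -((A⁻¹ * A).mulVec (B.mulVec v)) := by
        rw [Matrix.mulVec_neg, Matrix.mulVec_mulVec]
    _ = -(B.mulVec v) := by rw [hinv, Matrix.one_mulVec]
  have hmapB : mapply B x = (WithLp.equiv 2 (Fin n → ℂ)).symm (B.mulVec v) := rfl
  have hmapB0 : mapply B x ≠ 0 := by
    rw [hmapB]
    simpa using hBv
  have hmapA : mapply A⁻¹ x = -(mapply B x) := by
    rw [hmapB]
    show (WithLp.equiv 2 (Fin n → ℂ)).symm (A⁻¹.mulVec v) = _
    rw [hAinv]
    rfl
  set α : ℝ := angleTheta θ x (mapply B x) with hα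
  set r : ℝ := ‖mapply B x‖ / ‖x‖ with hr
  have hangA : angleTheta θ x (mapply A⁻¹ x) = Real.pi - α := by
    rw [hmapA, angleTheta_neg_right θ x (mapply B x) hx hmapB0]
  have hnormA : ‖mapply A⁻¹ x‖ = ‖mapply B x‖ := by rw [hmapA, norm_neg]
  set zA : ℂ := (r : ℂ) * Complex.exp ((↑(θ + (Real.pi - α)) : ℂ) * Complex.I) with hzA
  set zB : ℂ := (r : ℂ) * Complex.exp ((↑(θ - α) : ℂ) * Complex.I) with hzB
  have hzAmem : zA ∈ SRGt θ A⁻¹ := by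
    refine ⟨x, hx, Or.inl ?_⟩
    rw [hzA, hangA, hnormA, hr]
  have hzBmem : zB ∈ SRGtSet θ ℬ := by
    apply Set.mem_biUnion hB
    exact ⟨x, hx, Or.inr (by rw [hzB, hr])⟩
  apply h
  have hsum : zA + zB = 0 := by
    rw [hzA, hzB]
    have he : ((θ + (Real.pi - α) : ℝ) : ℂ) * Complex.I
        = ((θ - α : ℝ) : ℂ) * Complex.I + Real.pi * Complex.I := by
      push_cast; ring
    rw [he, Complex.exp_add, Complex.exp_pi_mul_I]
    ring
  rw [← hsum]
  exact Set.add_mem_add hzAmem hzBmem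
end

section
/- Let C ∈ ℂ^{n×n} and θ ∈ ℝ. Then every eigenvalue of C belongs to the θ-symmetric scaled relative graph of C, i.e., Λ(C) ⊂ SRG_θ(C). -/
open scoped Pointwise Classical
open Complex

/-- spectrum containment in the θ-symmetric SRG. -/
theorem stmt11 {n : ℕ} (C : Matrix (Fin n) (Fin n) ℂ) (θ : ℝ) :
    eigs C ⊆ SRGt θ C := by
  rintro μ ⟨v, hv, hCv⟩
  set x : EuclideanSpace ℂ (Fin n) := (WithLp.equiv 2 _).symm v with hxdef
  have hx0 : x ≠ 0 := by
    simpa [hxdef, WithLp.equiv] using hv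
  have hmap : mapply C x = μ • x := by
    simp [mapply, hxdef, Matrix.toEuclideanLin, hCv]
  have hxn : ‖x‖ ≠ 0 := norm_ne_zero_iff.mpr hx0
  refine ⟨x, hx0, ?_⟩
  by_cases hμ : μ = 0
  · left
    simp [hμ, hmap, norm_smul]
  · have hμabs : ‖μ‖ ≠ 0 := norm_ne_zero_iff.mpr hμ
    have hμx : μ • x ≠ 0 := smul_ne_zero hμ hx0
    have hnorm : (‖mapply C x‖ / ‖x‖ : ℝ) = ‖μ‖ := by
      rw [hmap, norm_smul]
      field_simp
    set t : ℝ := Complex.arg μ - θ with ht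
    have hemu : Complex.exp (-(θ:ℂ) * Complex.I) * μ =
        (‖μ‖ : ℂ) * Complex.exp ((t : ℂ) * Complex.I) := by
      conv_lhs => rw [← Complex.norm_mul_exp_arg_mul_I μ]
      rw [mul_comm, mul_assoc, ← Complex.exp_add]
      push_cast [ht]
      ring_nf
    have hinner : (inner ℂ x ((Complex.exp (-(θ:ℂ) * Complex.I)) • (μ • x)) : ℂ) =
        ((‖μ‖ : ℂ) * Complex.exp ((t : ℂ) * Complex.I)) * ((‖x‖ : ℂ)^2) := by
      rw [inner_smul_right, inner_smul_right, inner_self_eq_norm_sq_to_K, ← hemu]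
      push_cast
      ring_nf
      rfl
    have hre : ((inner ℂ x ((Complex.exp (-(θ:ℂ) * Complex.I)) • (μ • x)) : ℂ)).re
        / (‖x‖ * ‖μ • x‖) = Real.cos t := by
      rw [hinner]
      have h1 : (((‖μ‖ : ℂ) * Complex.exp ((t : ℂ) * Complex.I)) * ((‖x‖ : ℂ)^2)).re
          = ‖μ‖ * Real.cos t * ‖x‖^2 := by
        have : ((‖μ‖ : ℂ) * Complex.exp ((t : ℂ) * Complex.I)) * ((‖x‖ : ℂ)^2)
            = ((‖μ‖ * ‖x‖^2 : ℝ) : ℂ) * Complex.exp ((t : ℂ) * Complex.I) := by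
          push_cast; ring
        rw [this, Complex.re_ofReal_mul, Complex.exp_ofReal_mul_I_re]
        ring
      rw [h1, norm_smul]
      field_simp
    set a : ℝ := angleTheta θ x (mapply C x) with ha
    have hang : a = Real.arccos (Real.cos t) := by
      rw [ha, hmap, angleTheta, if_neg (by push_neg; exact ⟨hx0, hμx⟩), hre]
    have hcos : Real.cos a = Real.cos t := by
      rw [hang]; exact Real.cos_arccos (Real.neg_one_le_cos t) (Real.cos_le_one t)
    obtain ⟨k, hk | hk⟩ := Real.cos_eq_cos_iff.mp hcos
    · -- t = 2kπ + a
      left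
      have harg : (Complex.arg μ : ℝ) = (θ + a) + 2 * k * Real.pi := by
        rw [ht] at hk; linarith
      rw [hnorm]
      conv_lhs => rw [← Complex.norm_mul_exp_arg_mul_I μ]
      congr 1
      rw [harg]
      push_cast
      rw [add_mul, Complex.exp_add,
        show ((2:ℂ) * (k:ℤ) * (Real.pi:ℂ) * Complex.I) = (k:ℤ) * (2 * Real.pi * Complex.I) by ring,
        Complex.exp_int_mul_two_pi_mul_I, mul_one]
    · -- t = 2kπ - a
      right
      have harg : (Complex.arg μ : ℝ) = (θ - a) + 2 * k * Real.pi := by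
        rw [ht] at hk; linarith
      rw [hnorm]
      conv_lhs => rw [← Complex.norm_mul_exp_arg_mul_I μ]
      congr 1
      rw [harg]
      push_cast
      rw [add_mul, Complex.exp_add,
        show ((2:ℂ) * (k:ℤ) * (Real.pi:ℂ) * Complex.I) = (k:ℤ) * (2 * Real.pi * Complex.I) by ring,
        Complex.exp_int_mul_two_pi_mul_I, mul_one]
end

section
/- Let C ∈ ℂ^{n×n} and θ ∈ ℝ. Then the matrix set ℳ_{θ-arc}(C) = { M ∈ ℂ^{n×n} : SRG_θ(M) ⊂ Hull_arc(SRG_θ(C)) } satisfies the θ-arc property; in fact SRG_θ(ℳ_{θ-arc}(C)) = Hull_arc(SRG_θ(C)). -/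
open scoped Pointwise Classical
open Complex

noncomputable section AuxLemmas
open Complex

lemma mapply_smul_one {n : ℕ} (c : ℂ) (x : EuclideanSpace ℂ (Fin n)) :
    mapply (c • (1 : Matrix (Fin n) (Fin n) ℂ)) x = c • x := by
  simp [mapply, Matrix.toEuclideanLin_apply, Matrix.one_mulVec]

lemma exp_shift (θ s : ℝ) :
    Complex.exp ((↑(θ + s) : ℂ) * I) = Complex.exp ((θ:ℂ) * I) * Complex.exp ((s:ℂ) * I) := by
  rw [← Complex.exp_add]; congr 1; push_cast; ring

lemma conj_twist (θ s r : ℝ) :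
    (starRingEnd ℂ) ((↑r : ℂ) * Complex.exp ((s:ℂ) * I)) * Complex.exp ((↑(2*θ) : ℂ) * I)
      = (↑r : ℂ) * Complex.exp ((↑(2*θ - s) : ℂ) * I) := by
  rw [map_mul, Complex.conj_ofReal, ← Complex.exp_conj, map_mul, Complex.conj_ofReal,
    Complex.conj_I, mul_assoc, ← Complex.exp_add]
  congr 2
  push_cast; ring

lemma exp_real_inj {t s : ℝ} (h : Complex.exp ((t:ℂ) * I) = Complex.exp ((s:ℂ) * I)) :
    ∃ k : ℤ, t = s + k * (2 * Real.pi) := by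
  rw [Complex.exp_eq_exp_iff_exists_int] at h
  obtain ⟨k, hk⟩ := h
  refine ⟨k, ?_⟩
  have := congrArg Complex.im hk
  simpa using this

lemma arg_rep {r : ℝ} (s : ℝ) (hr : 0 < r) :
    ∃ k : ℤ, ((↑r : ℂ) * Complex.exp ((s:ℂ) * I)).arg = s + k * (2 * Real.pi) := by
  set u := (↑r : ℂ) * Complex.exp ((s:ℂ) * I) with hu
  have habs : ‖u‖ = r := by
    rw [hu, norm_mul, Complex.norm_real, Complex.norm_exp_ofReal_mul_I, mul_one, Real.norm_eq_abs, abs_of_pos hr]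
  have h := Complex.norm_mul_exp_arg_mul_I u
  rw [habs] at h
  have hr' : (↑r : ℂ) ≠ 0 := by exact_mod_cast hr.ne'
  have h2 : Complex.exp ((↑u.arg : ℂ) * I) = Complex.exp ((s:ℂ) * I) :=
    mul_left_cancel₀ hr' (h.trans hu)
  exact exp_real_inj h2

lemma abs_of_mem_arcPlus {θ : ℝ} {z v : ℂ} (h : v ∈ arcPlus θ z) :
    ‖v‖ = ‖z‖ := by
  obtain ⟨μ, _, rfl⟩ := h
  rw [norm_mul, Complex.norm_real, Complex.norm_exp_ofReal_mul_I, mul_one,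
    Real.norm_eq_abs, _root_.abs_of_nonneg (norm_nonneg z)]

lemma full_arc {θ : ℝ} {z : ℂ} (ha : Real.pi ≤ |z.arg - θ|) {v : ℂ}
    (hv : ‖v‖ = ‖z‖) : v ∈ arcPlus θ z := by
  have haa : 0 < |z.arg - θ| := lt_of_lt_of_le Real.pi_pos ha
  have ha0 : z.arg - θ ≠ 0 := by intro h; rw [h] at haa; simp at haa
  set u := v * Complex.exp (-(θ:ℂ) * I) with hu
  have habs_exp : ‖Complex.exp (-(θ:ℂ) * I)‖ = 1 := by
    have : -(θ:ℂ) * I = ((-θ : ℝ) : ℂ) * I := by push_cast; ring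
    rw [this, Complex.norm_exp_ofReal_mul_I]
  have huv : ‖u‖ = ‖v‖ := by rw [hu, norm_mul, habs_exp, mul_one]
  have hd1 : u.arg ≤ Real.pi := Complex.arg_le_pi u
  have hd2 : -Real.pi < u.arg := Complex.neg_pi_lt_arg u
  have hdiv : |u.arg / (z.arg - θ)| ≤ 1 := by
    rw [abs_div, div_le_one haa]
    calc |u.arg| ≤ Real.pi := abs_le.mpr ⟨by linarith, hd1⟩
    _ ≤ |z.arg - θ| := ha
  obtain ⟨h1, h2⟩ := abs_le.mp hdiv
  refine ⟨u.arg / (z.arg - θ), ⟨h1, h2⟩, ?_⟩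
  have hexp : (u.arg / (z.arg - θ)) * z.arg + θ * (1 - u.arg / (z.arg - θ)) = θ + u.arg := by
    field_simp; ring
  rw [hexp, ← hv, ← huv]
  have hveq : v = u * Complex.exp ((θ:ℂ) * I) := by
    rw [hu, mul_assoc, ← Complex.exp_add]; simp
  conv_lhs => rw [hveq, ← Complex.norm_mul_exp_arg_mul_I u]
  rw [mul_assoc, ← Complex.exp_add]
  congr 2
  push_cast; ring

lemma self_mem_arcPlus (θ : ℝ) (z : ℂ) : z ∈ arcPlus θ z := by
  refine ⟨1, ⟨by norm_num, le_refl 1⟩, ?_⟩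
  rw [show (1:ℝ) * z.arg + θ * (1 - 1) = z.arg by ring, Complex.norm_mul_exp_arg_mul_I]

lemma conj_mem_arcPlus {θ : ℝ} {z w : ℂ} (hw : w ∈ arcPlus θ z) :
    (starRingEnd ℂ) w * Complex.exp ((↑(2*θ) : ℂ) * I) ∈ arcPlus θ z := by
  obtain ⟨μ, hμ, rfl⟩ := hw
  refine ⟨-μ, ⟨by linarith [hμ.2], by linarith [hμ.1]⟩, ?_⟩
  rw [conj_twist]
  congr 2
  ring

lemma arc_arc {θ : ℝ} {z w : ℂ} (hw : w ∈ arcPlus θ z) :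
    arcPlus θ w ⊆ arcPlus θ z ∪ arcPlus θ ((starRingEnd ℂ) z * Complex.exp ((↑(2*θ) : ℂ) * I)) := by
  have haw : ‖w‖ = ‖z‖ := abs_of_mem_arcPlus hw
  by_cases hz0 : z = 0
  · subst hz0
    intro v hv
    left
    have hv0 : ‖v‖ = 0 := by
      rw [abs_of_mem_arcPlus hv, haw]; simp
    have : v = 0 := by simpa using hv0
    subst this
    exact ⟨1, ⟨by norm_num, le_refl 1⟩, by simp⟩
  set z' := (starRingEnd ℂ) z * Complex.exp ((↑(2*θ) : ℂ) * I) with hz'def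
  have haz' : ‖z'‖ = ‖z‖ := by
    rw [hz'def, norm_mul, Complex.norm_conj, Complex.norm_exp_ofReal_mul_I, mul_one]
  by_cases hbig : Real.pi ≤ |z.arg - θ|
  · intro v hv; exact Or.inl (full_arc hbig ((abs_of_mem_arcPlus hv).trans haw))
  by_cases hbig' : Real.pi ≤ |z'.arg - θ|
  · intro v hv
    exact Or.inr (full_arc hbig' (((abs_of_mem_arcPlus hv).trans haw).trans haz'.symm))
  push_neg at hbig hbig'
  have hzpos : 0 < ‖z‖ := norm_pos_iff.mpr hz0
  have hz'e : z' = (↑(‖z‖) : ℂ) * Complex.exp ((↑(2*θ - z.arg) : ℂ) * I) := by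
    rw [hz'def]
    conv_lhs => rw [← Complex.norm_mul_exp_arg_mul_I z]
    exact conj_twist θ z.arg (‖z‖)
  obtain ⟨m, hm⟩ := arg_rep (2*θ - z.arg) hzpos
  rw [← hz'e] at hm
  have hm0 : m = 0 := by
    have hb1 := abs_lt.mp hbig
    have hb2 := abs_lt.mp hbig'
    rw [hm] at hb2
    have hmr : -1 < (m:ℝ) ∧ (m:ℝ) < 1 := by
      constructor <;> nlinarith [Real.pi_pos]
    have h1 : (-1 : ℤ) < m := by exact_mod_cast hmr.1
    have h2 : (m : ℤ) < 1 := by exact_mod_cast hmr.2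
    omega
  rw [hm0] at hm
  push_cast at hm
  have hA1 : -Real.pi < z.arg := Complex.neg_pi_lt_arg z
  have hA2 : z.arg ≤ Real.pi := Complex.arg_le_pi z
  have hA3 : -Real.pi < 2*θ - z.arg := by
    have := Complex.neg_pi_lt_arg z'; rw [hm] at this; linarith
  have hA4 : 2*θ - z.arg ≤ Real.pi := by
    have := Complex.arg_le_pi z'; rw [hm] at this; linarith
  obtain ⟨μ, hμ, rfl⟩ := hw
  obtain ⟨k, hk⟩ := arg_rep (μ * z.arg + θ * (1 - μ)) hzpos
  have hs1 : -Real.pi < μ * z.arg + θ * (1 - μ) := by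
    rcases eq_or_lt_of_le hμ.1 with h | h
    · rw [← h]; linarith
    · nlinarith [mul_pos (show (0:ℝ) < 1 + μ by linarith) (show (0:ℝ) < z.arg + Real.pi by linarith),
        mul_nonneg (show (0:ℝ) ≤ 1 - μ by linarith [hμ.2])
          (show (0:ℝ) ≤ 2*θ - z.arg + Real.pi by linarith)]
  have hs2 : μ * z.arg + θ * (1 - μ) ≤ Real.pi := by
    nlinarith [mul_nonneg (show (0:ℝ) ≤ 1 + μ by linarith [hμ.1])
        (show (0:ℝ) ≤ Real.pi - z.arg by linarith),
      mul_nonneg (show (0:ℝ) ≤ 1 - μ by linarith [hμ.2])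
        (show (0:ℝ) ≤ Real.pi - (2*θ - z.arg) by linarith)]
  set s := μ * z.arg + θ * (1 - μ) with hs
  set W := (↑(‖z‖) : ℂ) * Complex.exp ((↑s : ℂ) * I) with hW
  have hk0 : k = 0 := by
    have hw1 : -Real.pi < W.arg := Complex.neg_pi_lt_arg W
    have hw2 : W.arg ≤ Real.pi := Complex.arg_le_pi W
    rw [hk] at hw1 hw2
    have hmr : -1 < (k:ℝ) ∧ (k:ℝ) < 1 := by
      constructor <;> nlinarith [Real.pi_pos]
    have h1 : (-1 : ℤ) < k := by exact_mod_cast hmr.1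
    have h2 : (k : ℤ) < 1 := by exact_mod_cast hmr.2
    omega
  rw [hk0] at hk
  push_cast at hk
  intro v hv
  obtain ⟨ν, hν, rfl⟩ := hv
  left
  refine ⟨ν * μ, ⟨?_, ?_⟩, ?_⟩
  · nlinarith [mul_nonneg (show (0:ℝ) ≤ 1 + ν by linarith [hν.1])
      (show (0:ℝ) ≤ 1 + μ by linarith [hμ.1]),
      mul_nonneg (show (0:ℝ) ≤ 1 - ν by linarith [hν.2])
      (show (0:ℝ) ≤ 1 - μ by linarith [hμ.2])]
  · nlinarith [mul_nonneg (show (0:ℝ) ≤ 1 + ν by linarith [hν.1])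
      (show (0:ℝ) ≤ 1 - μ by linarith [hμ.2]),
      mul_nonneg (show (0:ℝ) ≤ 1 - ν by linarith [hν.2])
      (show (0:ℝ) ≤ 1 + μ by linarith [hμ.1])]
  · have harg : ν * W.arg + θ * (1 - ν) = (ν * μ) * z.arg + θ * (1 - ν * μ) := by
      rw [hk, hs]; ring
    rw [show ‖W‖ = ‖z‖ from haw, harg]

end AuxLemmas

noncomputable section ScalarLemmas
open Complex

lemma mapply_zero {n : ℕ} (x : EuclideanSpace ℂ (Fin n)) :
    mapply (0 : Matrix (Fin n) (Fin n) ℂ) x = 0 := by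
  simp [mapply]

lemma exp_arccos_cos (β : ℝ) :
    Complex.exp ((↑(Real.arccos (Real.cos β)) : ℂ) * I) = Complex.exp ((β:ℂ) * I) ∨
    Complex.exp ((↑(Real.arccos (Real.cos β)) : ℂ) * I) = Complex.exp ((↑(-β) : ℂ) * I) := by
  have h1 : Real.cos (Real.arccos (Real.cos β)) = Real.cos β :=
    Real.cos_arccos (Real.neg_one_le_cos β) (Real.cos_le_one β)
  have h2 : Real.sin (Real.arccos (Real.cos β)) = |Real.sin β| := by
    rw [Real.sin_arccos,
      show 1 - Real.cos β ^ 2 = Real.sin β ^ 2 by nlinarith [Real.sin_sq_add_cos_sq β]]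
    exact Real.sqrt_sq_eq_abs _
  rcases abs_cases (Real.sin β) with ⟨h3, _⟩ | ⟨h3, _⟩
  · left
    rw [Complex.exp_mul_I, Complex.exp_mul_I, ← Complex.ofReal_cos, ← Complex.ofReal_sin,
      ← Complex.ofReal_cos, ← Complex.ofReal_sin, h1, h2, h3]
  · right
    rw [Complex.exp_mul_I, Complex.exp_mul_I, ← Complex.ofReal_cos, ← Complex.ofReal_sin,
      ← Complex.ofReal_cos, ← Complex.ofReal_sin, Real.cos_neg, Real.sin_neg, h1, h2, h3]

lemma hrot (θ : ℝ) (c : ℂ) :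
    Complex.exp (-(θ:ℂ) * I) * c = (↑(‖c‖) : ℂ) * Complex.exp ((↑(c.arg - θ) : ℂ) * I) := by
  conv_lhs => rw [← Complex.norm_mul_exp_arg_mul_I c]
  rw [show Complex.exp (-(θ:ℂ) * I) * ((↑(‖c‖) : ℂ) * Complex.exp ((↑c.arg : ℂ) * I))
      = (↑(‖c‖) : ℂ) * (Complex.exp ((↑c.arg : ℂ) * I) * Complex.exp (-(θ:ℂ) * I)) by ring,
    ← Complex.exp_add]
  congr 2
  push_cast; ring

lemma scalar_norm {n : ℕ} (c : ℂ) {x : EuclideanSpace ℂ (Fin n)} (hx : x ≠ 0) :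
    ‖mapply (c • (1 : Matrix (Fin n) (Fin n) ℂ)) x‖ / ‖x‖ = ‖c‖ := by
  rw [mapply_smul_one, norm_smul, mul_div_assoc,
    div_self (norm_ne_zero_iff.2 hx), mul_one]

lemma scalar_angle {n : ℕ} {c : ℂ} (hc : c ≠ 0) {x : EuclideanSpace ℂ (Fin n)} (hx : x ≠ 0)
    (θ : ℝ) :
    angleTheta θ x (mapply (c • (1 : Matrix (Fin n) (Fin n) ℂ)) x)
      = Real.arccos (Real.cos (c.arg - θ)) := by
  rw [mapply_smul_one]
  have hcx : c • x ≠ 0 := smul_ne_zero hc hx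
  rw [angleTheta, if_neg (by push_neg; exact ⟨hx, hcx⟩)]
  congr 1
  have hinner : (inner ℂ x ((Complex.exp (-(θ:ℂ) * I)) • (c • x)) : ℂ)
      = Complex.exp (-(θ:ℂ) * I) * c * ((‖x‖^2 : ℝ) : ℂ) := by
    rw [inner_smul_right, inner_smul_right, inner_self_eq_norm_sq_to_K]
    push_cast
    rw [← mul_assoc]
    with_unfolding_all rfl
  rw [hinner, hrot]
  have hre : ∀ t : ℝ, ((↑(‖c‖) : ℂ) * Complex.exp ((t : ℂ) * I) * ((‖x‖^2 : ℝ) : ℂ)).re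
      = ‖c‖ * Real.cos t * ‖x‖^2 := by
    intro t
    simp [Complex.mul_re, Complex.exp_mul_I, Complex.sin_ofReal_re, Complex.cos_ofReal_re,
      ← Complex.ofReal_pow, Complex.ofReal_re, Complex.ofReal_im]
  rw [hre, norm_smul]
  have hxn : ‖x‖ ≠ 0 := norm_ne_zero_iff.2 hx
  have hcn : ‖c‖ ≠ 0 := by simpa using hc
  field_simp

lemma scalar_branch {n : ℕ} (θ : ℝ) {c : ℂ} (hc : c ≠ 0) {x : EuclideanSpace ℂ (Fin n)}
    (hx : x ≠ 0) :
    ((↑(‖mapply (c • (1 : Matrix (Fin n) (Fin n) ℂ)) x‖ / ‖x‖) : ℂ) *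
        Complex.exp ((↑(θ + angleTheta θ x (mapply (c • (1 : Matrix (Fin n) (Fin n) ℂ)) x)) : ℂ) * I) = c ∧
      (↑(‖mapply (c • (1 : Matrix (Fin n) (Fin n) ℂ)) x‖ / ‖x‖) : ℂ) *
        Complex.exp ((↑(θ - angleTheta θ x (mapply (c • (1 : Matrix (Fin n) (Fin n) ℂ)) x)) : ℂ) * I)
        = (starRingEnd ℂ) c * Complex.exp ((↑(2*θ) : ℂ) * I)) ∨
    ((↑(‖mapply (c • (1 : Matrix (Fin n) (Fin n) ℂ)) x‖ / ‖x‖) : ℂ) *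
        Complex.exp ((↑(θ + angleTheta θ x (mapply (c • (1 : Matrix (Fin n) (Fin n) ℂ)) x)) : ℂ) * I)
        = (starRingEnd ℂ) c * Complex.exp ((↑(2*θ) : ℂ) * I) ∧
      (↑(‖mapply (c • (1 : Matrix (Fin n) (Fin n) ℂ)) x‖ / ‖x‖) : ℂ) *
        Complex.exp ((↑(θ - angleTheta θ x (mapply (c • (1 : Matrix (Fin n) (Fin n) ℂ)) x)) : ℂ) * I) = c) := by
  rw [scalar_norm c hx, scalar_angle hc hx θ]
  set β := c.arg - θ with hβ
  set α := Real.arccos (Real.cos β) with hα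
  have hplus : ∀ γ : ℝ, Complex.exp ((↑α : ℂ) * I) = Complex.exp ((↑γ : ℂ) * I) →
      (↑(‖c‖) : ℂ) * Complex.exp ((↑(θ + α) : ℂ) * I)
        = (↑(‖c‖) : ℂ) * Complex.exp ((↑(θ + γ) : ℂ) * I) := by
    intro γ hγ
    rw [exp_shift, exp_shift, hγ]
  have hminus : ∀ γ : ℝ, Complex.exp ((↑α : ℂ) * I) = Complex.exp ((↑γ : ℂ) * I) →
      (↑(‖c‖) : ℂ) * Complex.exp ((↑(θ - α) : ℂ) * I)
        = (↑(‖c‖) : ℂ) * Complex.exp ((↑(θ - γ) : ℂ) * I) := by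
    intro γ hγ
    have e1 : Complex.exp ((↑(θ - α) : ℂ) * I)
        = Complex.exp ((θ:ℂ) * I) * (Complex.exp ((↑α : ℂ) * I))⁻¹ := by
      rw [← Complex.exp_neg, ← Complex.exp_add]; congr 1; push_cast; ring
    have e2 : Complex.exp ((↑(θ - γ) : ℂ) * I)
        = Complex.exp ((θ:ℂ) * I) * (Complex.exp ((↑γ : ℂ) * I))⁻¹ := by
      rw [← Complex.exp_neg, ← Complex.exp_add]; congr 1; push_cast; ring
    rw [e1, e2, hγ]
  have hθβ : θ + β = c.arg := by rw [hβ]; ring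
  have hcval : (↑(‖c‖) : ℂ) * Complex.exp ((↑(θ + β) : ℂ) * I) = c := by
    rw [hθβ, Complex.norm_mul_exp_arg_mul_I]
  have hcval' : (↑(‖c‖) : ℂ) * Complex.exp ((↑(θ - β) : ℂ) * I)
      = (starRingEnd ℂ) c * Complex.exp ((↑(2*θ) : ℂ) * I) := by
    conv_rhs => rw [← Complex.norm_mul_exp_arg_mul_I c]
    rw [conj_twist]
    congr 2
    rw [hβ]; ring
  rcases exp_arccos_cos β with hγ | hγ
  · left
    constructor
    · rw [hplus β hγ, hcval]
    · rw [hminus β hγ, hcval']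
  · right
    constructor
    · rw [hplus (-β) hγ, show θ + -β = θ - β by ring, hcval']
    · rw [hminus (-β) hγ, show θ - -β = θ + β by ring, hcval]

lemma SRGt_scalar_subset {n : ℕ} (θ : ℝ) (c : ℂ) :
    SRGt θ (c • (1 : Matrix (Fin n) (Fin n) ℂ))
      ⊆ {c, (starRingEnd ℂ) c * Complex.exp ((↑(2*θ) : ℂ) * I)} := by
  rintro w ⟨x, hx, hw⟩
  by_cases hc : c = 0
  · subst hc
    have : w = 0 := by
      rcases hw with hw | hw <;>
        simpa [zero_smul, mapply_zero] using hw
    subst this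
    exact Or.inl rfl
  · rcases scalar_branch θ hc hx (n := n) with ⟨h1, h2⟩ | ⟨h1, h2⟩ <;>
      rcases hw with rfl | rfl
    · exact Or.inl h1
    · exact Or.inr h2
    · exact Or.inr h1
    · exact Or.inl h2

lemma mem_SRGt_scalar {n : ℕ} (θ : ℝ) (c : ℂ) {x : EuclideanSpace ℂ (Fin n)} (hx : x ≠ 0) :
    c ∈ SRGt θ (c • (1 : Matrix (Fin n) (Fin n) ℂ)) := by
  by_cases hc : c = 0
  · subst hc
    exact ⟨x, hx, Or.inl (by simp [zero_smul, mapply_zero])⟩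
  · rcases scalar_branch θ hc hx (n := n) with ⟨h1, _⟩ | ⟨_, h2⟩
    · exact ⟨x, hx, Or.inl h1.symm⟩
    · exact ⟨x, hx, Or.inr h2.symm⟩

lemma conj_mem_SRGt {n : ℕ} {θ : ℝ} {C : Matrix (Fin n) (Fin n) ℂ} {z : ℂ}
    (hz : z ∈ SRGt θ C) :
    (starRingEnd ℂ) z * Complex.exp ((↑(2*θ) : ℂ) * I) ∈ SRGt θ C := by
  obtain ⟨x, hx, hz | hz⟩ := hz
  · refine ⟨x, hx, Or.inr ?_⟩
    rw [hz, conj_twist]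
    congr 2
    ring
  · refine ⟨x, hx, Or.inl ?_⟩
    rw [hz, conj_twist]
    congr 2
    ring

end ScalarLemmas

/-- the arc-hull over-approximation set satisfies the θ-arc property,
and its θ-symmetric SRG equals the arc hull. -/
theorem stmt15 {n : ℕ} (C : Matrix (Fin n) (Fin n) ℂ) (θ : ℝ) :
    arcProp θ { M : Matrix (Fin n) (Fin n) ℂ | SRGt θ M ⊆ hullArc θ C } ∧
    SRGtSet θ { M : Matrix (Fin n) (Fin n) ℂ | SRGt θ M ⊆ hullArc θ C } = hullArc θ C := by
  have hclosed : ∀ v ∈ hullArc θ C, arcPlus θ v ⊆ hullArc θ C := by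
    intro v hv u hu
    simp only [hullArc, Set.mem_iUnion, exists_prop] at hv ⊢
    obtain ⟨z, hz, hvz⟩ := hv
    rcases arc_arc hvz hu with h | h
    · exact ⟨z, hz, h⟩
    · exact ⟨_, conj_mem_SRGt hz, h⟩
  have heq : SRGtSet θ { M : Matrix (Fin n) (Fin n) ℂ | SRGt θ M ⊆ hullArc θ C }
      = hullArc θ C := by
    apply Set.Subset.antisymm
    · intro w hw
      simp only [SRGtSet, Set.mem_iUnion, exists_prop, Set.mem_setOf_eq] at hw
      obtain ⟨M, hM, hwM⟩ := hw
      exact hM hwM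
    · intro w hw
      have hw' := hw
      simp only [hullArc, Set.mem_iUnion, exists_prop] at hw'
      obtain ⟨z, hz, hwz⟩ := hw'
      have hz2 := hz
      obtain ⟨x₀, hx₀, -⟩ := hz2
      simp only [SRGtSet, Set.mem_iUnion, exists_prop, Set.mem_setOf_eq]
      refine ⟨w • (1 : Matrix (Fin n) (Fin n) ℂ), ?_, mem_SRGt_scalar θ w hx₀⟩
      intro u hu
      have h := SRGt_scalar_subset θ w hu
      simp only [Set.mem_insert_iff, Set.mem_singleton_iff] at h
      rcases h with rfl | rfl
      · exact hw
      · simp only [hullArc, Set.mem_iUnion, exists_prop]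
        exact ⟨z, hz, conj_mem_arcPlus hwz⟩
  refine ⟨Or.inl ?_, heq⟩
  intro v hv
  rw [heq] at hv ⊢
  exact hclosed v hv
end
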